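/- Let X be a Lorentzian pre-length space with continuous τ satisfying τ(x,x) = 0 for all x, and α, β : (-π/2, π/2) → X two τ-arclength parametrized timelike lines of length π (AdS-lines). Define, where applicable, c_{αβ}(s,t) = arcosh((cos(τ(α(s),β(t))) − sin(s)sin(t)) / (cos(s)cos(t))) for α(s) ≤ β(t), and analogously c_{βα}, and c^N_{α+}(s) = arcosh((1 − sin(s)sin(t*)) / (cos(s)cos(t*))) where t* = inf{t : α(s) ≤ β(t)}, analogously c^N_{β+}. If all four functions are constant with common value c wherever defined and the infima are attained, then the map sending α(s) ↦ (s,0) and β(t) ↦ (t,c) into AdS' = (-π/2,π/2) ×_cos ℝ is τ-preserving and ≤-preserving; conversely, if α and β admit such a parallel realization at distance c, all four functions are constant equal to c. -/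

import Mathlib

noncomputable section
open Real Set
open scoped Classical

/-- A Lorentzian pre-length space: a set with a metric, a chronological relation `≪`,
a causal relation `≤`, and a lower semicontinuous time separation function `τ`
satisfying `τ(x,y) > 0 ↔ x ≪ y` and the reverse triangle inequality. -/
structure LorentzianPreLengthSpace (X : Type*) [MetricSpace X] where
  chron : X → X → Prop
  causal : X → X → Prop
  tau : X → X → ℝ
  causal_refl : ∀ x, causal x x
  causal_trans : ∀ {x y z}, causal x y → causal y z → causal x z
  chron_trans : ∀ {x y z}, chron x y → chron y z → chron x z
  chron_causal : ∀ {x y}, chron x y → causal x y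
  tau_nonneg : ∀ x y, 0 ≤ tau x y
  tau_pos_iff : ∀ x y, 0 < tau x y ↔ chron x y
  tau_lsc : LowerSemicontinuous fun p : X × X => tau p.1 p.2
  rev_triangle : ∀ {x y z}, causal x y → causal y z → tau x y + tau y z ≤ tau x z

/-- The inverse hyperbolic cosine. -/
def arcosh (x : ℝ) : ℝ := Real.log (x + Real.sqrt (x ^ 2 - 1))

/-- The causal relation of `AdS' = (-π/2,π/2) ×_cos ℝ`. -/
def adsLe (p q : ℝ × ℝ) : Prop :=
  p.1 ≤ q.1 ∧
    Real.sin p.1 * Real.sin q.1 + Real.cos p.1 * Real.cos q.1 * Real.cosh (q.2 - p.2) ≤ 1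

/-- The time separation of `AdS' = (-π/2,π/2) ×_cos ℝ`. -/
def adsTau (p q : ℝ × ℝ) : ℝ :=
  if adsLe p q then
    Real.arccos (Real.sin p.1 * Real.sin q.1 +
      Real.cos p.1 * Real.cos q.1 * Real.cosh (q.2 - p.2))
  else 0

/-- The parameter interval `(-π/2, π/2)` of AdS-lines. -/
def adsI : Set ℝ := Set.Ioo (-(π / 2)) (π / 2)

variable {X : Type*} [MetricSpace X]

/-- An AdS-line: an (inextendible) timelike distance realizer of `τ`-length `π`,
parametrized in `τ`-arclength on `(-π/2, π/2)`. -/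
def IsAdSLine (L : LorentzianPreLengthSpace X) (γ : ℝ → X) : Prop :=
  ∀ s ∈ adsI, ∀ t ∈ adsI, s ≤ t → L.tau (γ s) (γ t) = t - s

/-- A parallel realization of two AdS-lines `α, β` at spacelike distance `c`: the map
sending `α(s) ↦ (s,0)` and `β(t) ↦ (t,c)` into `AdS' = (-π/2,π/2) ×_cos ℝ` is
`τ`-preserving and `≤`-preserving on the union of the two lines. -/
def ParallelRealization (L : LorentzianPreLengthSpace X) (α β : ℝ → X) (c : ℝ) : Prop :=
  ∀ s ∈ adsI, ∀ t ∈ adsI,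
    ((L.causal (α s) (α t) ↔ adsLe (s, 0) (t, 0)) ∧
      (L.causal (β s) (β t) ↔ adsLe (s, c) (t, c)) ∧
      (L.causal (α s) (β t) ↔ adsLe (s, 0) (t, c)) ∧
      (L.causal (β s) (α t) ↔ adsLe (s, c) (t, 0))) ∧
    (L.tau (α s) (α t) = adsTau (s, 0) (t, 0) ∧
      L.tau (β s) (β t) = adsTau (s, c) (t, c) ∧
      L.tau (α s) (β t) = adsTau (s, 0) (t, c) ∧
      L.tau (β s) (α t) = adsTau (s, c) (t, 0))

/-- Two AdS-lines are AdS-parallel if they admit a parallel realization at some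
distance `c ≥ 0`. -/
def AdSParallel (L : LorentzianPreLengthSpace X) (α β : ℝ → X) : Prop :=
  ∃ c, 0 ≤ c ∧ ParallelRealization L α β c

/-- The `c`-criterion for parallel AdS-lines: the functions `c_{αβ}`, `c_{βα}`,
`c^N_{α+}`, `c^N_{β+}` are constant with common value `c` wherever defined, and the
infima appearing in the null functions are attained (are minima). -/
def CCriterion (L : LorentzianPreLengthSpace X) (α β : ℝ → X) (c : ℝ) : Prop :=
  (∀ s ∈ adsI, ∀ t ∈ adsI, L.causal (α s) (β t) →
    _root_.arcosh ((Real.cos (L.tau (α s) (β t)) - Real.sin s * Real.sin t) /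
      (Real.cos s * Real.cos t)) = c) ∧
  (∀ s ∈ adsI, ∀ t ∈ adsI, L.causal (β t) (α s) →
    _root_.arcosh ((Real.cos (L.tau (β t) (α s)) - Real.sin s * Real.sin t) /
      (Real.cos s * Real.cos t)) = c) ∧
  (∀ s ∈ adsI, ∃ tm, IsLeast {t | t ∈ adsI ∧ L.causal (α s) (β t)} tm ∧
    _root_.arcosh ((1 - Real.sin s * Real.sin tm) / (Real.cos s * Real.cos tm)) = c) ∧
  (∀ s ∈ adsI, ∃ tm, IsLeast {t | t ∈ adsI ∧ L.causal (β s) (α t)} tm ∧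
    _root_.arcosh ((1 - Real.sin s * Real.sin tm) / (Real.cos s * Real.cos tm)) = c)

/-!
In `AdS'` the point `(t, c)` lies in the causal future of `(s, 0)` iff `s ≤ t` and
`adsCos s t c = sin s sin t + cos s cos t cosh c ≤ 1`, and then `adsCos s t c` is the cosine of
their time separation. The constancy of `c_{αβ}` says exactly that `cos τ(α s, β t) = adsCos s t c`
on causal pairs, and that of `c^N_{α+}` that the first `t*` with `α s ≤ β t*` solves
`adsCos s t* c = 1`. Since `t ↦ adsCos s t c` is a sinusoid with `adsCos s s c ≥ 1`, the set
`{t ≥ s | adsCos s t c ≤ 1}` is the ray `[t*, π/2)`, which is therefore the causal future of `α s`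
on `β`. Conversely, a realization turns all four functions into `arcosh (cosh c) = c`.
-/

namespace LorentzianPreLengthSpace

theorem tau_self (L : LorentzianPreLengthSpace X) (x : X) : L.tau x x = 0 := by
  have := L.rev_triangle (L.causal_refl x) (L.causal_refl x)
  linarith [L.tau_nonneg x x]

variable {L : LorentzianPreLengthSpace X} {x y : X}

theorem causal_of_tau_pos (h : 0 < L.tau x y) : L.causal x y :=
  L.chron_causal ((L.tau_pos_iff x y).mp h)

theorem tau_eq_zero_of_not_causal (h : ¬ L.causal x y) : L.tau x y = 0 :=
  (L.tau_nonneg x y).eq_or_lt.elim Eq.symm fun hpos => absurd (causal_of_tau_pos hpos) h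

end LorentzianPreLengthSpace

/-- The cosine of the `τ`-separation of `(s, 0) ≤ (t, c)` in `AdS'`. -/
def adsCos (s t c : ℝ) : ℝ := sin s * sin t + cos s * cos t * cosh c

section AdS

variable {s t u tm a b c : ℝ}

theorem adsLe_iff : adsLe (s, a) (t, b) ↔ s ≤ t ∧ adsCos s t (b - a) ≤ 1 := Iff.rfl

theorem adsTau_of_adsLe (h : adsLe (s, a) (t, b)) :
    adsTau (s, a) (t, b) = arccos (adsCos s t (b - a)) :=
  if_pos h

theorem adsTau_of_not_adsLe (h : ¬ adsLe (s, a) (t, b)) : adsTau (s, a) (t, b) = 0 :=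
  if_neg h

theorem adsCos_neg (s t c : ℝ) : adsCos s t (-c) = adsCos s t c := by
  rw [adsCos, adsCos, cosh_neg]

theorem adsCos_zero (s t : ℝ) : adsCos s t 0 = cos (t - s) := by
  rw [adsCos, cosh_zero, mul_one, cos_sub]
  ring

theorem adsLe_swap_snd : adsLe (s, a) (t, b) ↔ adsLe (s, b) (t, a) := by
  rw [adsLe_iff, adsLe_iff, ← neg_sub a b, adsCos_neg]

theorem adsTau_swap_snd : adsTau (s, a) (t, b) = adsTau (s, b) (t, a) := by
  by_cases h : adsLe (s, a) (t, b)
  · rw [adsTau_of_adsLe h, adsTau_of_adsLe (adsLe_swap_snd.mp h), ← neg_sub a b, adsCos_neg]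
  · rw [adsTau_of_not_adsLe h, adsTau_of_not_adsLe (mt adsLe_swap_snd.mpr h)]

theorem one_le_adsCos_self (s c : ℝ) : 1 ≤ adsCos s s c := by
  rw [adsCos]
  nlinarith [sin_sq_add_cos_sq s, one_le_cosh c, sq_nonneg (cos s)]

theorem cos_pos_of_mem_adsI (hs : s ∈ adsI) : 0 < cos s :=
  cos_pos_of_mem_Ioo hs

theorem abs_sin_lt_one_of_mem_adsI (hs : s ∈ adsI) : |sin s| < 1 := by
  rw [← sq_lt_one_iff_abs_lt_one]
  nlinarith [sin_sq_add_cos_sq s, cos_pos_of_mem_adsI hs]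

theorem abs_sin_mul_sin_lt_one (hs : s ∈ adsI) (ht : t ∈ adsI) : |sin s * sin t| < 1 := by
  rw [abs_mul]
  exact mul_lt_one_of_nonneg_of_lt_one_left (abs_nonneg _) (abs_sin_lt_one_of_mem_adsI hs)
    (abs_sin_lt_one_of_mem_adsI ht).le

theorem sin_mul_sin_lt_one (hs : s ∈ adsI) (ht : t ∈ adsI) : sin s * sin t < 1 :=
  (abs_lt.mp (abs_sin_mul_sin_lt_one hs ht)).2

theorem sin_mul_sin_lt_adsCos (hs : s ∈ adsI) (ht : t ∈ adsI) (c : ℝ) :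
    sin s * sin t < adsCos s t c := by
  have := mul_pos (mul_pos (cos_pos_of_mem_adsI hs) (cos_pos_of_mem_adsI ht)) (cosh_pos c)
  rw [adsCos]
  linarith

theorem neg_one_lt_adsCos (hs : s ∈ adsI) (ht : t ∈ adsI) (c : ℝ) : -1 < adsCos s t c :=
  (neg_lt_of_abs_lt (abs_sin_mul_sin_lt_one hs ht)).trans (sin_mul_sin_lt_adsCos hs ht c)

theorem eq_of_adsCos_zero_eq_one (hs : s ∈ adsI) (ht : t ∈ adsI) (h : adsCos s t 0 = 1) :
    s = t := by
  rw [adsCos_zero, cos_eq_one_iff_of_lt_of_lt (by linarith [hs.2, ht.1, pi_pos])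
    (by linarith [hs.1, ht.2, pi_pos])] at h
  linarith

theorem _root_.Real.arcosh_nonpos_of_le_one {y : ℝ} (hy : y ≤ 1) : Real.arcosh y ≤ 0 := by
  rw [Real.arcosh, ← log_abs]
  refine log_nonpos (abs_nonneg _) (abs_le.mpr ⟨?_, ?_⟩)
  · rcases le_or_gt (-1) y with hy' | hy'
    · linarith [sqrt_nonneg (y ^ 2 - 1)]
    · linarith [le_sqrt_of_sq_le (show (-1 - y) ^ 2 ≤ y ^ 2 - 1 by nlinarith)]
  · rcases le_or_gt (y ^ 2) 1 with hy' | hy'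
    · rw [sqrt_eq_zero_of_nonpos (by linarith)]
      linarith
    · have : √(y ^ 2 - 1) < -y :=
        (sqrt_lt' (by nlinarith)).mpr (by nlinarith)
      linarith

theorem eq_cosh_of_arcosh_eq {y : ℝ} (hc : 0 ≤ c) (hy : 0 < y ∨ 0 < c)
    (h : Real.arcosh y = c) : y = cosh c := by
  have hy : 0 < y := hy.elim id fun hc' => by
    by_contra! hy
    linarith [Real.arcosh_nonpos_of_le_one (hy.trans zero_le_one)]
  exact strictMonoOn_arcosh.injOn hy (cosh_pos c) (by rw [h, Real.arcosh_cosh hc])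

theorem arcosh_eq_real_arcosh (y : ℝ) : _root_.arcosh y = Real.arcosh y := rfl

theorem eq_adsCos_of_arcosh_eq {x : ℝ} (hc : 0 ≤ c) (hs : s ∈ adsI) (ht : t ∈ adsI)
    (hx : sin s * sin t < x ∨ 0 < c)
    (h : _root_.arcosh ((x - sin s * sin t) / (cos s * cos t)) = c) : x = adsCos s t c := by
  have hpos := mul_pos (cos_pos_of_mem_adsI hs) (cos_pos_of_mem_adsI ht)
  have hcosh := eq_cosh_of_arcosh_eq hc (hx.imp_left fun hx => div_pos (sub_pos.mpr hx) hpos) h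
  rw [div_eq_iff hpos.ne'] at hcosh
  rw [adsCos]
  linear_combination hcosh

theorem arcosh_eq_of_eq_adsCos {x : ℝ} (hc : 0 ≤ c) (hs : s ∈ adsI) (ht : t ∈ adsI)
    (h : x = adsCos s t c) : _root_.arcosh ((x - sin s * sin t) / (cos s * cos t)) = c := by
  have hpos := mul_pos (cos_pos_of_mem_adsI hs) (cos_pos_of_mem_adsI ht)
  rw [h, adsCos, add_sub_cancel_left, mul_div_cancel_left₀ _ hpos.ne', arcosh_eq_real_arcosh,
    Real.arcosh_cosh hc]

theorem lt_mul_sin_add_mul_cos {A B m x y z : ℝ} (hm : 0 < m) (hxy : x < y) (hyz : y < z)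
    (hzx : z - x < π) (hx : m ≤ A * sin x + B * cos x) (hz : m ≤ A * sin z + B * cos z) :
    m < A * sin y + B * cos y := by
  -- `(sin y, cos y)` is a positive combination of `(sin x, cos x)` and `(sin z, cos z)` of total
  -- weight `> 1`.
  have hsin : sin (z - x) * sin y = sin (z - y) * sin x + sin (y - x) * sin z := by
    simp only [sin_sub]; ring
  have hcos : sin (z - x) * cos y = sin (z - y) * cos x + sin (y - x) * cos z := by
    simp only [sin_sub]; ring
  have hp : 0 < sin (z - y) := sin_pos_of_pos_of_lt_pi (by linarith) (by linarith)
  have hq : 0 < sin (y - x) := sin_pos_of_pos_of_lt_pi (by linarith) (by linarith)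
  have hr : 0 < sin (z - x) := sin_pos_of_pos_of_lt_pi (by linarith) hzx
  have hsum : sin (z - x) < sin (z - y) + sin (y - x) := by
    have h₁ : cos (z - y) < 1 := by
      simpa using cos_lt_cos_of_nonneg_of_le_pi le_rfl (by linarith) (by linarith : 0 < z - y)
    have h₂ : cos (y - x) < 1 := by
      simpa using cos_lt_cos_of_nonneg_of_le_pi le_rfl (by linarith) (by linarith : 0 < y - x)
    rw [show z - x = (z - y) + (y - x) by ring, sin_add]
    nlinarith
  have hkey : sin (z - x) * (A * sin y + B * cos y) =
      sin (z - y) * (A * sin x + B * cos x) + sin (y - x) * (A * sin z + B * cos z) := by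
    linear_combination A * hsin + B * hcos
  refine lt_of_mul_lt_mul_left ?_ hr.le
  rw [hkey]
  nlinarith

theorem le_of_adsCos_le_one (hs : s ∈ adsI) (htm : tm ∈ adsI) (htm1 : adsCos s tm c = 1)
    (hsu : s ≤ u) (hu1 : adsCos s u c ≤ 1) : tm ≤ u := by
  by_contra! hutm
  have hF : ∀ v, adsCos s v c = sin s * sin v + cos s * cosh c * cos v := fun v => by
    rw [adsCos]; ring
  rcases hsu.eq_or_lt with rfl | hsu
  · have hcosh : cosh c = 1 := by
      have := cos_pos_of_mem_adsI hs
      rw [adsCos] at hu1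
      nlinarith [sin_sq_add_cos_sq s, one_le_cosh c, mul_pos this this]
    have : adsCos s tm c = adsCos s tm 0 := by rw [adsCos, adsCos, hcosh, cosh_zero]
    exact hutm.ne (eq_of_adsCos_zero_eq_one hs htm (this ▸ htm1))
  · have := lt_mul_sin_add_mul_cos one_pos hsu hutm (by linarith [hs.1, htm.2])
      ((hF s).symm ▸ one_le_adsCos_self s c) ((hF tm).symm ▸ htm1.ge)
    linarith [hF u]

theorem exists_adsCos_eq_one (hs : s ∈ adsI) (c : ℝ) :
    ∃ tm ∈ adsI, s ≤ tm ∧ adsCos s tm c = 1 := by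
  have hend : adsCos s (π / 2) c = sin s := by simp [adsCos]
  have hcont : ContinuousOn (fun v => adsCos s v c) (Icc s (π / 2)) := by
    unfold adsCos; fun_prop
  obtain ⟨tm, ⟨hstm, htm⟩, htm1⟩ := intermediate_value_Icc' hs.2.le hcont
    ⟨hend ▸ sin_le_one s, one_le_adsCos_self s c⟩
  have hne : tm ≠ π / 2 := by
    rintro rfl
    have : adsCos s (π / 2) c = 1 := htm1
    linarith [hend ▸ this, (abs_lt.mp (abs_sin_lt_one_of_mem_adsI hs)).2]
  exact ⟨tm, ⟨hs.1.trans_le hstm, htm.lt_of_ne hne⟩, hstm, htm1⟩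

end AdS

namespace IsAdSLine

variable {L : LorentzianPreLengthSpace X} {γ : ℝ → X} {s t : ℝ}

theorem causal_of_le (hγ : IsAdSLine L γ) (hs : s ∈ adsI) (ht : t ∈ adsI) (h : s ≤ t) :
    L.causal (γ s) (γ t) := by
  rcases h.eq_or_lt with rfl | h
  · exact L.causal_refl _
  · exact L.causal_of_tau_pos (by rw [hγ s hs t ht h.le]; linarith)

theorem le_of_causal (hγ : IsAdSLine L γ) (hs : s ∈ adsI) (ht : t ∈ adsI)
    (h : L.causal (γ s) (γ t)) : s ≤ t := by
  by_contra! hts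
  have := L.rev_triangle h (hγ.causal_of_le ht hs hts.le)
  rw [L.tau_self, hγ t ht s hs hts.le] at this
  linarith [L.tau_nonneg (γ s) (γ t)]

theorem tau_le_of_causal (hγ : IsAdSLine L γ) (hs : s ∈ adsI) (ht : t ∈ adsI) {y : X}
    (h₁ : L.causal (γ s) y) (h₂ : L.causal y (γ t)) : L.tau (γ s) y ≤ t - s := by
  have := L.rev_triangle h₁ h₂
  rw [hγ s hs t ht (hγ.le_of_causal hs ht (L.causal_trans h₁ h₂))] at this
  linarith [L.tau_nonneg y (γ t)]

end IsAdSLine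

def IsRealizedBy (L : LorentzianPreLengthSpace X) (γ δ : ℝ → X) (a b : ℝ) : Prop :=
  ∀ s ∈ adsI, ∀ t ∈ adsI,
    (L.causal (γ s) (δ t) ↔ adsLe (s, a) (t, b)) ∧ L.tau (γ s) (δ t) = adsTau (s, a) (t, b)

/-- `c_{γδ} ≡ c` wherever it is defined. -/
def CrossFunctionEq (L : LorentzianPreLengthSpace X) (γ δ : ℝ → X) (c : ℝ) : Prop :=
  ∀ s ∈ adsI, ∀ t ∈ adsI, L.causal (γ s) (δ t) →
    _root_.arcosh ((cos (L.tau (γ s) (δ t)) - sin s * sin t) / (cos s * cos t)) = c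

/-- `c^N_{γ+} ≡ c`, with the infimum `t*` attained. -/
def NullFunctionEq (L : LorentzianPreLengthSpace X) (γ δ : ℝ → X) (c : ℝ) : Prop :=
  ∀ s ∈ adsI, ∃ tm, IsLeast {t | t ∈ adsI ∧ L.causal (γ s) (δ t)} tm ∧
    _root_.arcosh ((1 - sin s * sin tm) / (cos s * cos tm)) = c

section Realization

variable {L : LorentzianPreLengthSpace X} {α β γ δ : ℝ → X} {a b c : ℝ}

theorem cCriterion_iff : CCriterion L α β c ↔ CrossFunctionEq L α β c ∧
    CrossFunctionEq L β α c ∧ NullFunctionEq L α β c ∧ NullFunctionEq L β α c := by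
  have hβα : (∀ s ∈ adsI, ∀ t ∈ adsI, L.causal (β t) (α s) →
      _root_.arcosh ((cos (L.tau (β t) (α s)) - sin s * sin t) / (cos s * cos t)) = c) ↔
      CrossFunctionEq L β α c :=
    ⟨fun h s hs t ht hst => by simpa only [mul_comm] using h t ht s hs hst,
      fun h s hs t ht hts => by simpa only [mul_comm] using h t ht s hs hts⟩
  rw [CCriterion, hβα]
  rfl

theorem parallelRealization_iff : ParallelRealization L α β c ↔
    IsRealizedBy L α α 0 0 ∧ IsRealizedBy L β β c c ∧ IsRealizedBy L α β 0 c ∧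
      IsRealizedBy L β α c 0 := by
  simp only [ParallelRealization, IsRealizedBy, ← forall_and]
  exact forall₂_congr fun s _ => forall₂_congr fun t _ => by tauto

theorem isRealizedBy_swap_snd : IsRealizedBy L γ δ a b ↔ IsRealizedBy L γ δ b a := by
  simp only [IsRealizedBy, adsLe_swap_snd (a := a), adsTau_swap_snd (a := a)]

theorem IsAdSLine.isRealizedBy_self (hγ : IsAdSLine L γ) (a : ℝ) : IsRealizedBy L γ γ a a := by
  intro s hs t ht
  have hle : adsLe (s, a) (t, a) ↔ s ≤ t := by
    rw [adsLe_iff, sub_self, adsCos_zero]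
    exact and_iff_left_of_imp fun _ => cos_le_one _
  refine ⟨(Iff.intro (hγ.le_of_causal hs ht) (hγ.causal_of_le hs ht)).trans hle.symm, ?_⟩
  by_cases hst : s ≤ t
  · rw [adsTau_of_adsLe (hle.mpr hst), sub_self, adsCos_zero,
      arccos_cos (by linarith) (by linarith [hs.1, ht.2]), hγ s hs t ht hst]
  · rw [adsTau_of_not_adsLe (mt hle.mp hst),
      L.tau_eq_zero_of_not_causal (mt (hγ.le_of_causal hs ht) hst)]

end Realization

section Criterion

variable {L : LorentzianPreLengthSpace X} {γ δ : ℝ → X} {s u c : ℝ}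

theorem tau_eq_arccos_adsCos (hγ : IsAdSLine L γ) (hc : 0 ≤ c)
    (hcross : CrossFunctionEq L γ δ c) (hnull : NullFunctionEq L δ γ c) (hs : s ∈ adsI)
    (hu : u ∈ adsI) (h : L.causal (γ s) (δ u)) :
    L.tau (γ s) (δ u) = arccos (adsCos s u c) ∧ adsCos s u c ≤ 1 := by
  obtain ⟨um, ⟨⟨hum, hδγ⟩, -⟩, hum_eq⟩ := hnull u hu
  have hτ_le : L.tau (γ s) (δ u) ≤ um - s := hγ.tau_le_of_causal hs hum h hδγ
  have hτ_lt : L.tau (γ s) (δ u) < π := by linarith [hs.1, hum.2]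
  -- `arcosh 0 = log 0 = 0`, so for `c = 0` the argument of `arcosh` must be shown positive.
  have hpos : sin s * sin u < cos (L.tau (γ s) (δ u)) ∨ 0 < c := by
    rcases hc.eq_or_lt with rfl | hc
    · left
      have hu_um : u = um := eq_of_adsCos_zero_eq_one hu hum
        (eq_adsCos_of_arcosh_eq le_rfl hu hum (.inl (sin_mul_sin_lt_one hu hum)) hum_eq).symm
      calc sin s * sin u < adsCos s u 0 := sin_mul_sin_lt_adsCos hs hu 0
        _ = cos (u - s) := adsCos_zero s u
        _ ≤ cos (L.tau (γ s) (δ u)) :=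
          cos_le_cos_of_nonneg_of_le_pi (L.tau_nonneg _ _) (by linarith [hs.1, hu.2])
            (hu_um ▸ hτ_le)
    · exact .inr hc
  have hcos := eq_adsCos_of_arcosh_eq hc hs hu hpos (hcross s hs u hu h)
  exact ⟨by rw [← hcos, arccos_cos (L.tau_nonneg _ _) hτ_lt.le], hcos ▸ cos_le_one _⟩

theorem le_of_causal_of_functionEq (hγ : IsAdSLine L γ) (hδ : IsAdSLine L δ) (hc : 0 ≤ c)
    (hcross : CrossFunctionEq L γ δ c) (hnull : NullFunctionEq L δ γ c) (hs : s ∈ adsI)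
    (hu : u ∈ adsI) (h : L.causal (γ s) (δ u)) : s ≤ u := by
  by_contra! hus
  have hss := L.causal_trans h (hδ.causal_of_le hu hs hus.le)
  -- `γ s` and `δ s` are null related since `adsCos s s c ≥ 1`, yet `δ u ≪ δ s`.
  have hτ_zero : L.tau (γ s) (δ s) = 0 := by
    obtain ⟨hτ, hle⟩ := tau_eq_arccos_adsCos hγ hc hcross hnull hs hs hss
    rw [hτ, le_antisymm hle (one_le_adsCos_self s c), arccos_one]
  have := L.rev_triangle h (hδ.causal_of_le hu hs hus.le)
  rw [hτ_zero, hδ u hu s hs hus.le] at this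
  linarith [L.tau_nonneg (γ s) (δ u)]

theorem isRealizedBy_of_functionEq (hγ : IsAdSLine L γ) (hδ : IsAdSLine L δ) (hc : 0 ≤ c)
    (hcross : CrossFunctionEq L γ δ c) (hnullγ : NullFunctionEq L γ δ c)
    (hnullδ : NullFunctionEq L δ γ c) : IsRealizedBy L γ δ 0 c := by
  intro s hs t ht
  obtain ⟨tm, ⟨⟨htm, hγδ⟩, -⟩, htm_eq⟩ := hnullγ s hs
  have htm1 : adsCos s tm c = 1 :=
    (eq_adsCos_of_arcosh_eq hc hs htm (.inl (sin_mul_sin_lt_one hs htm)) htm_eq).symm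
  have hiff : L.causal (γ s) (δ t) ↔ adsLe (s, 0) (t, c) := by
    rw [adsLe_iff, sub_zero]
    refine ⟨fun h => ⟨le_of_causal_of_functionEq hγ hδ hc hcross hnullδ hs ht h,
      (tau_eq_arccos_adsCos hγ hc hcross hnullδ hs ht h).2⟩, fun ⟨hst, h1⟩ => ?_⟩
    exact L.causal_trans hγδ (hδ.causal_of_le htm ht (le_of_adsCos_le_one hs htm htm1 hst h1))
  refine ⟨hiff, ?_⟩
  by_cases h : L.causal (γ s) (δ t)
  · rw [adsTau_of_adsLe (hiff.mp h), sub_zero]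
    exact (tau_eq_arccos_adsCos hγ hc hcross hnullδ hs ht h).1
  · rw [adsTau_of_not_adsLe (mt hiff.mpr h), L.tau_eq_zero_of_not_causal h]

theorem IsRealizedBy.crossFunctionEq (h : IsRealizedBy L γ δ 0 c) (hc : 0 ≤ c) :
    CrossFunctionEq L γ δ c := by
  intro s hs t ht hst
  have hle := (h s hs t ht).1.mp hst
  rw [(h s hs t ht).2, adsTau_of_adsLe hle, sub_zero]
  rw [adsLe_iff, sub_zero] at hle
  rw [cos_arccos (neg_one_lt_adsCos hs ht c).le hle.2]
  exact arcosh_eq_of_eq_adsCos hc hs ht rfl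

theorem IsRealizedBy.nullFunctionEq (h : IsRealizedBy L γ δ 0 c) (hc : 0 ≤ c) :
    NullFunctionEq L γ δ c := by
  intro s hs
  have hiff : ∀ t ∈ adsI, L.causal (γ s) (δ t) ↔ s ≤ t ∧ adsCos s t c ≤ 1 := fun t ht => by
    rw [(h s hs t ht).1, adsLe_iff, sub_zero]
  obtain ⟨tm, htm, hstm, htm1⟩ := exists_adsCos_eq_one hs c
  refine ⟨tm, ⟨⟨htm, (hiff tm htm).mpr ⟨hstm, htm1.le⟩⟩, ?_⟩,
    arcosh_eq_of_eq_adsCos hc hs htm htm1.symm⟩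
  rintro t ⟨ht, hst⟩
  obtain ⟨hst, hle⟩ := (hiff t ht).mp hst
  exact le_of_adsCos_le_one hs htm htm1 hst hle

end Criterion

theorem c_criterion_iff_parallel_general
    (L : LorentzianPreLengthSpace X)
    (α β : ℝ → X) (hα : IsAdSLine L α) (hβ : IsAdSLine L β)
    (c : ℝ) (hc : 0 ≤ c) :
    CCriterion L α β c ↔ ParallelRealization L α β c := by
  rw [cCriterion_iff, parallelRealization_iff, isRealizedBy_swap_snd (a := c) (b := 0)]
  constructor
  · rintro ⟨hαβ, hβα, hnα, hnβ⟩
    exact ⟨hα.isRealizedBy_self 0, hβ.isRealizedBy_self c,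
      isRealizedBy_of_functionEq hα hβ hc hαβ hnα hnβ,
      isRealizedBy_of_functionEq hβ hα hc hβα hnβ hnα⟩
  · rintro ⟨-, -, hαβ, hβα⟩
    exact ⟨hαβ.crossFunctionEq hc, hβα.crossFunctionEq hc, hαβ.nullFunctionEq hc,
      hβα.nullFunctionEq hc⟩

/-- The `c`-criterion for parallel AdS-lines: two AdS-lines satisfy the `c`-criterion
with value `c` if and only if they admit a parallel realization at distance `c`. -/
theorem c_criterion_iff_parallel
    (L : LorentzianPreLengthSpace X)
    (hcont : Continuous fun p : X × X => L.tau p.1 p.2)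
    (hdiag : ∀ x, L.tau x x = 0)
    (α β : ℝ → X) (hα : IsAdSLine L α) (hβ : IsAdSLine L β)
    (c : ℝ) (hc : 0 ≤ c) :
    CCriterion L α β c ↔ ParallelRealization L α β c :=
  c_criterion_iff_parallel_general L α β hα hβ c hc
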